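/- (Proposition: maximum principle for the semi-discrete asymmetric scheme with absorbing condition.) Let α ∈ (0,2) with α ≠ 1, β ∈ (−1,1), f ∈ C¹(ℝ), g ∈ C²(ℝ), σ ∈ C¹(ℝ) with σ(x) ≠ 0 for all x and |σ(·)|^α ∈ C²(ℝ). Let J ≥ 2 be an integer, h = 1/J, x_j = jh for j ∈ ℤ, T > 0, and set I_h := {j ∈ ℤ : |jh| < 1}, I_{h,T} := I_h × (0,T], ∂I_{h,T} := (ℤ × [0,T]) ∖ I_{h,T}. Define M(x) := |σ(x)|^α (g²/|σ|^α)′(x) − f(x), N(x) := (1/2)|σ(x)|^α (g²/|σ|^α)″(x) − |σ(x)|^α (f/|σ|^α)′(x), C_{1,β}(x) := C_p(β) if σ(x) > 0 and C_n(β) if σ(x) < 0, C_{2,β}(x) := −βC_α if σ(x) > 0 and βC_α if σ(x) < 0, M̂(x) := M(x) − |σ(x)|^α (C_{2,β}(x)/(1−α))[|σ(x)|^{1−α} − (1−x)^{1−α}] if |σ(x)| > 1−x and M̂(x) := M(x) if |σ(x)| < 1−x, N̂(x) := N(x) + βC_α σ′(x) − |σ(x)|^α (C_{1,−β}(x)/α)(1−x)^{−α}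 − |σ(x)|^α (C_{1,β}(x)/α)(1+x)^{−α}, and C_h(x) := g(x)²/2 − (C_α|σ(x)|^α/2) ζ(α−1) h^{2−α}. For a family U = (U_j(t))_{j∈ℤ} with each U_j : [0,T] → ℝ continuous and differentiable on (0,T], define for j ∈ I_h: (AU)_j := C_h(x_j)(U_{j+1} − 2U_j + U_{j−1})/h² + M̂(x_j) δ_u U_j + N̂(x_j) U_j, where δ_u U_j := (U_j − U_{j−1})/h if M̂(x_j) < 0 and (U_{j+1} − U_j)/h if M̂(x_j) ≥ 0; and (BU)_j := |σ(x_j)|^α C_{1,β}(x_j) h ∑_{k=1−J, k≠j}^{J−1} (U_k − U_j)|x_k − x_j|^{−1−α} + |σ(x_j)|^α C_{2,β}(x_j) h ∑′_{k=j+1}^{J} (U_k − U_j − (x_k − x_j)(U_j − U_{j−1})/h)|x_k − x_j|^{−1−α} if |σ(x_j)| + x_j > 1, and (BU)_j := |σ(x_j)|^α C_{1,β}(x_j) h ∑_{k=1−J, k≠j}^{J−1} (U_k − U_j)|x_k − x_j|^{−1−α} + |σ(x_j)|^α C_{2,β}(x_j) h [ ∑′_{k=j+1}^{j+m} (U_k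 − U_j − (x_k − x_j)(U_j − U_{j−1})/h)|x_k − x_j|^{−1−α} + ∑_{k=j+m}^{J} (U_k − U_j)|x_k − x_j|^{−1−α} ] if |σ(x_j)| + x_j < 1, where m := ⌊|σ(x_j)|/h⌋, ∑ gives weight 1/2 to the terms at both end indices, and ∑′ gives weight 1/2 only to the term at the top index. Set (R̃U)_j := (AU)_j + (BU)_j. Assume N̂(x_j) ≤ 0, C_{2,β}(x_j) ≥ 0, and C_h(x_j) ≥ 0 for all j ∈ I_h, and assume U_j(t) = 0 for all |j| ≥ J and t ∈ [0,T]. Then: (i) if dU_j/dt − (R̃U)_j ≤ 0 for all (j,t) ∈ I_{h,T}, then max_{(j,t) ∈ ℤ×[0,T]} U_j(t) = max_{(j,t) ∈ ∂I_{h,T}} U_j(t); and (ii) if dU_j/dt − (R̃U)_j ≥ 0 for all (j,t) ∈ I_{h,T}, then min_{(j,t) ∈ ℤ×[0,T]} U_j(t) = min_{(j,t) ∈ ∂I_{h,T}} U_j(t). -/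

import Mathlib

/-!
Perturb `U` to `U_j(t) - εt`. Its maximum over `ℤ × [0,T]` is attained, since only finitely many
sites are active and the absorbing sites carry the value `0`. At an interior maximum `(j₀, t₀)`,
`U(·, t₀)` has a nonnegative spatial maximum at `j₀`, where every term of `R̃U` is `≤ 0`: the
second difference, the upwinded drift term, `N̂ U_j` since `N̂ ≤ 0`, and both quadrature sums,
whose weights are nonnegative and whose gradient correction is `≤ 0` because
`U_j - U_{j-1} ≥ 0`. So `dU_j/dt ≤ 0` there, while maximality in time forces `dU_j/dt ≥ ε`.
Letting `ε → 0` gives (i); (ii) is (i) applied to `-U`, the scheme being linear.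
-/

open MeasureTheory Real Set Filter Topology Finset

noncomputable def Calpha (α : ℝ) : ℝ :=
  if α = 1 then 2 / π else α * (1 - α) / (Real.Gamma (2 - α) * Real.cos (π * α / 2))

noncomputable def Cp (α β : ℝ) : ℝ := Calpha α * (1 + β) / 2

noncomputable def Cn (α β : ℝ) : ℝ := Calpha α * (1 - β) / 2

noncomputable def zetaR (x : ℝ) : ℝ := (riemannZeta (x : ℂ)).re

lemma Calpha_pos {α : ℝ} (hα : α ∈ Ioo (0 : ℝ) 2) : 0 < Calpha α := by
  obtain ⟨h0, h2⟩ := hα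
  unfold Calpha
  split_ifs with h1
  · positivity
  have hΓ : 0 < Gamma (2 - α) := Gamma_pos_of_pos (by linarith)
  rcases lt_or_gt_of_ne h1 with h1 | h1
  · have hcos : 0 < cos (π * α / 2) :=
      cos_pos_of_mem_Ioo ⟨by nlinarith [pi_pos], by nlinarith [pi_pos]⟩
    exact div_pos (by nlinarith) (by positivity)
  · have hcos : cos (π * α / 2) < 0 :=
      cos_neg_of_pi_div_two_lt_of_lt (by nlinarith [pi_pos]) (by nlinarith [pi_pos])
    exact div_pos_of_neg_of_neg (by nlinarith) (mul_neg_of_pos_of_neg hΓ hcos)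

lemma Cp_nonneg {α β : ℝ} (hα : α ∈ Ioo (0 : ℝ) 2) (hβ : -1 ≤ β) : 0 ≤ Cp α β := by
  have := Calpha_pos hα
  unfold Cp
  nlinarith

lemma Cn_nonneg {α β : ℝ} (hα : α ∈ Ioo (0 : ℝ) 2) (hβ : β ≤ 1) : 0 ≤ Cn α β := by
  have := Calpha_pos hα
  unfold Cn
  nlinarith

lemma IsCompact.exists_isMaxOn_finset {ι X : Type*} [TopologicalSpace X] {K : Set X}
    (hK : IsCompact K) (hK₀ : K.Nonempty) {s : Finset ι} (hs : s.Nonempty) {V : ι → X → ℝ}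
    (hV : ∀ j ∈ s, ContinuousOn (V j) K) :
    ∃ j₀ ∈ s, ∃ x₀ ∈ K, ∀ j ∈ s, ∀ x ∈ K, V j x ≤ V j₀ x₀ := by
  have : Nonempty X := ⟨hK₀.some⟩
  have := fun j hj => hK.exists_isMaxOn hK₀ (hV j hj)
  choose! τ hτ hτmax using this
  obtain ⟨j₀, hj₀, hj₀max⟩ := s.exists_max_image (fun j => V j (τ j)) hs
  exact ⟨j₀, hj₀, τ j₀, hτ j₀ hj₀, fun j hj x hx => (hτmax j hj hx).trans (hj₀max j hj)⟩

lemma HasDerivAt.nonneg_of_isMaxOn_Icc {f : ℝ → ℝ} {f' a b : ℝ} (hf : HasDerivAt f f' b)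
    (hab : a < b) (hmax : IsMaxOn f (Icc a b) b) : 0 ≤ f' := by
  have hdir : a - b ∈ posTangentConeAt (Icc a b) b :=
    sub_mem_posTangentConeAt_of_segment_subset (by rw [segment_symm, segment_eq_Icc hab.le])
  have := hmax.localize.hasFDerivWithinAt_nonpos hf.hasFDerivAt.hasFDerivWithinAt hdir
  simp only [ContinuousLinearMap.toSpanSingleton_apply, smul_eq_mul] at this
  nlinarith

section ParabolicMaximumPrinciple

variable {ι : Type*} {T : ℝ} {U U' : ι → ℝ → ℝ} {I : ι → Prop}

lemma exists_parabolicBoundary_le_add [Infinite ι] (hT : 0 < T) (s : Finset ι)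
    (hsupp : ∀ j ∉ s, ∀ t, U j t = 0) (hcont : ∀ j, ContinuousOn (U j) (Icc 0 T))
    (hderiv : ∀ j, I j → ∀ t ∈ Ioc 0 T, HasDerivAt (U j) (U' j t) t)
    (hmax : ∀ j, I j → ∀ t ∈ Ioc 0 T, (∀ k, U k t ≤ U j t) → 0 ≤ U j t → U' j t ≤ 0)
    {ε : ℝ} (hε : 0 < ε) :
    ∃ j₀, ∃ t₀ ∈ Icc 0 T, ¬(I j₀ ∧ t₀ ∈ Ioc 0 T) ∧
      ∀ j, ∀ t ∈ Icc 0 T, U j t ≤ U j₀ t₀ + ε * T := by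
  classical
  obtain ⟨j₁, hj₁⟩ := Infinite.exists_notMem_finset s
  set V : ι → ℝ → ℝ := fun j t => U j t - ε * t with hV
  have h0 : (0 : ℝ) ∈ Icc 0 T := ⟨le_rfl, hT.le⟩
  obtain ⟨j₀, -, t₀, ht₀, hV₀⟩ := isCompact_Icc.exists_isMaxOn_finset (nonempty_Icc.2 hT.le)
    (Finset.insert_nonempty j₁ s) (V := V)
    fun j _ => (hcont j).sub (continuousOn_const.mul continuousOn_id)
  have hV₁ : V j₁ 0 ≤ V j₀ t₀ := hV₀ j₁ (mem_insert_self j₁ s) 0 h0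
  have hglobal : ∀ j, ∀ t ∈ Icc 0 T, V j t ≤ V j₀ t₀ := by
    intro j t ht
    by_cases hj : j ∈ insert j₁ s
    · exact hV₀ j hj t ht
    · have hjs : j ∉ s := fun h => hj (mem_insert_of_mem h)
      simp only [hV, hsupp j hjs, hsupp j₁ hj₁] at hV₁ ⊢
      nlinarith [ht.1]
  simp only [hV, hsupp j₁ hj₁] at hV₁
  refine ⟨j₀, t₀, ht₀, fun ⟨hI, ht₀'⟩ => ?_, fun j t ht => ?_⟩
  · have hspace : ∀ k, U k t₀ ≤ U j₀ t₀ := fun k => by linarith [hglobal k t₀ ht₀]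
    have htime : 0 ≤ U' j₀ t₀ - ε * 1 :=
      ((hderiv j₀ hI t₀ ht₀').sub ((hasDerivAt_id t₀).const_mul ε)).nonneg_of_isMaxOn_Icc
        ht₀'.1 fun t ht => hglobal j₀ t ⟨ht.1, ht.2.trans ht₀'.2⟩
    linarith [hmax j₀ hI t₀ ht₀' hspace (by nlinarith [ht₀.1])]
  · have := hglobal j t ht
    simp only [hV] at this
    nlinarith [ht.2, ht₀.1]

theorem sSup_eq_sSup_parabolicBoundary [Infinite ι] (hT : 0 < T) (s : Finset ι)
    (hsupp : ∀ j ∉ s, ∀ t, U j t = 0) (hcont : ∀ j, ContinuousOn (U j) (Icc 0 T))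
    (hderiv : ∀ j, I j → ∀ t ∈ Ioc 0 T, HasDerivAt (U j) (U' j t) t)
    (hmax : ∀ j, I j → ∀ t ∈ Ioc 0 T, (∀ k, U k t ≤ U j t) → 0 ≤ U j t → U' j t ≤ 0) :
    sSup {y | ∃ j, ∃ t ∈ Icc 0 T, y = U j t}
      = sSup {y | ∃ j, ∃ t ∈ Icc 0 T, ¬(I j ∧ t ∈ Ioc 0 T) ∧ y = U j t} := by
  set S := {y | ∃ j, ∃ t ∈ Icc 0 T, y = U j t}
  set S' := {y | ∃ j, ∃ t ∈ Icc 0 T, ¬(I j ∧ t ∈ Ioc 0 T) ∧ y = U j t}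
  have hbound := fun ε (hε : 0 < ε) =>
    exists_parabolicBoundary_le_add hT s hsupp hcont hderiv hmax hε
  have hS'S : S' ⊆ S := by rintro _ ⟨j, t, ht, -, rfl⟩; exact ⟨j, t, ht, rfl⟩
  obtain ⟨j₀, t₀, ht₀, hbd, hle⟩ := hbound 1 one_pos
  have hS'ne : S'.Nonempty := ⟨_, j₀, t₀, ht₀, hbd, rfl⟩
  have hSbdd : BddAbove S := ⟨U j₀ t₀ + 1 * T, by rintro _ ⟨j, t, ht, rfl⟩; exact hle j t ht⟩
  refine le_antisymm (le_of_forall_pos_le_add fun δ hδ => ?_) (csSup_le_csSup hSbdd hS'ne hS'S)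
  obtain ⟨j₀, t₀, ht₀, hbd, hle⟩ := hbound (δ / T) (div_pos hδ hT)
  rw [div_mul_cancel₀ _ hT.ne'] at hle
  have hsup : U j₀ t₀ ≤ sSup S' := le_csSup (hSbdd.mono hS'S) ⟨j₀, t₀, ht₀, hbd, rfl⟩
  exact csSup_le (hS'ne.mono hS'S) fun _ ⟨j, t, ht, hy⟩ => hy ▸ (hle j t ht).trans (by linarith)

theorem sInf_eq_sInf_parabolicBoundary [Infinite ι] (hT : 0 < T) (s : Finset ι)
    (hsupp : ∀ j ∉ s, ∀ t, U j t = 0) (hcont : ∀ j, ContinuousOn (U j) (Icc 0 T))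
    (hderiv : ∀ j, I j → ∀ t ∈ Ioc 0 T, HasDerivAt (U j) (U' j t) t)
    (hmin : ∀ j, I j → ∀ t ∈ Ioc 0 T, (∀ k, U j t ≤ U k t) → U j t ≤ 0 → 0 ≤ U' j t) :
    sInf {y | ∃ j, ∃ t ∈ Icc 0 T, y = U j t}
      = sInf {y | ∃ j, ∃ t ∈ Icc 0 T, ¬(I j ∧ t ∈ Ioc 0 T) ∧ y = U j t} := by
  have hnegU := sSup_eq_sSup_parabolicBoundary (U := fun j t => -U j t) (U' := fun j t => -U' j t)
    (I := I) hT s (fun j hj t => by simp [hsupp j hj t]) (fun j => (hcont j).neg)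
    (fun j hj t ht => (hderiv j hj t ht).neg) fun j hj t ht hk hpos =>
      neg_nonpos.2 (hmin j hj t ht (fun k => neg_le_neg_iff.1 (hk k)) (neg_nonneg.1 hpos))
  rw [Real.sInf_def, Real.sInf_def]
  convert congrArg Neg.neg hnegU using 3 <;> ext y <;>
    simp only [Set.mem_neg, Set.mem_ofPred_eq, neg_eq_iff_eq_neg]

end ParabolicMaximumPrinciple

section Scheme

variable (α : ℝ) (σ C1b C2b Ch Mhat Nhat : ℝ → ℝ) (J : ℤ) (h : ℝ)

noncomputable def localOp (u : ℤ → ℝ) (j : ℤ) : ℝ :=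
  Ch ((j : ℝ) * h) * (u (j + 1) - 2 * u j + u (j - 1)) / h ^ 2
    + Mhat ((j : ℝ) * h) *
        (if Mhat ((j : ℝ) * h) < 0 then (u j - u (j - 1)) / h else (u (j + 1) - u j) / h)
    + Nhat ((j : ℝ) * h) * u j

noncomputable def nonlocalOp (u : ℤ → ℝ) (j : ℤ) : ℝ :=
  if 1 < |σ ((j : ℝ) * h)| + (j : ℝ) * h then
    |σ ((j : ℝ) * h)| ^ α * C1b ((j : ℝ) * h) * h *
      ∑ k ∈ (Finset.Icc (1 - J) (J - 1)).erase j,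
        (if k = 1 - J ∨ k = J - 1 then (1/2 : ℝ) else 1) *
          (u k - u j) * |(k : ℝ) * h - (j : ℝ) * h| ^ (-(1 + α))
    + |σ ((j : ℝ) * h)| ^ α * C2b ((j : ℝ) * h) * h *
      ∑ k ∈ Finset.Icc (j + 1) J,
        (if k = J then (1/2 : ℝ) else 1) *
          (u k - u j - ((k : ℝ) * h - (j : ℝ) * h) * (u j - u (j - 1)) / h) *
            |(k : ℝ) * h - (j : ℝ) * h| ^ (-(1 + α))
  else
    |σ ((j : ℝ) * h)| ^ α * C1b ((j : ℝ) * h) * h *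
      ∑ k ∈ (Finset.Icc (1 - J) (J - 1)).erase j,
        (if k = 1 - J ∨ k = J - 1 then (1/2 : ℝ) else 1) *
          (u k - u j) * |(k : ℝ) * h - (j : ℝ) * h| ^ (-(1 + α))
    + |σ ((j : ℝ) * h)| ^ α * C2b ((j : ℝ) * h) * h *
      ((∑ k ∈ Finset.Icc (j + 1) (j + ⌊|σ ((j : ℝ) * h)| / h⌋),
          (if k = j + ⌊|σ ((j : ℝ) * h)| / h⌋ then (1/2 : ℝ) else 1) *
            (u k - u j - ((k : ℝ) * h - (j : ℝ) * h) * (u j - u (j - 1)) / h) *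
              |(k : ℝ) * h - (j : ℝ) * h| ^ (-(1 + α)))
        + ∑ k ∈ Finset.Icc (j + ⌊|σ ((j : ℝ) * h)| / h⌋) J,
            (if k = j + ⌊|σ ((j : ℝ) * h)| / h⌋ ∨ k = J then (1/2 : ℝ) else 1) *
              (u k - u j) * |(k : ℝ) * h - (j : ℝ) * h| ^ (-(1 + α)))

variable {α σ C1b C2b Ch Mhat Nhat J h}

lemma localOp_neg (u : ℤ → ℝ) (j : ℤ) :
    localOp Ch Mhat Nhat h (fun k => -u k) j = -localOp Ch Mhat Nhat h u j := by
  unfold localOp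
  split_ifs <;> ring

lemma nonlocalOp_neg (u : ℤ → ℝ) (j : ℤ) :
    nonlocalOp α σ C1b C2b J h (fun k => -u k) j = -nonlocalOp α σ C1b C2b J h u j := by
  have hdiff : ∀ w x y r : ℝ, w * (-x - -y) * r = -(w * (x - y) * r) := fun _ _ _ _ => by ring
  have hcorr : ∀ w a b c d e r : ℝ,
      w * (-a - -b - e * (-b - -c) / d) * r = -(w * (a - b - e * (b - c) / d) * r) :=
    fun _ _ _ _ _ _ _ => by ring
  unfold nonlocalOp
  split_ifs <;> simp only [hdiff, hcorr, Finset.sum_neg_distrib] <;> ring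

lemma localOp_nonpos_of_isMax (hh : 0 < h) {u : ℤ → ℝ} {j : ℤ} (hCh : 0 ≤ Ch ((j : ℝ) * h))
    (hNhat : Nhat ((j : ℝ) * h) ≤ 0) (hmax : ∀ k, u k ≤ u j) (hpos : 0 ≤ u j) :
    localOp Ch Mhat Nhat h u j ≤ 0 := by
  have hdiffusion : Ch ((j : ℝ) * h) * (u (j + 1) - 2 * u j + u (j - 1)) / h ^ 2 ≤ 0 :=
    div_nonpos_of_nonpos_of_nonneg
      (mul_nonpos_of_nonneg_of_nonpos hCh (by linarith [hmax (j + 1), hmax (j - 1)]))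
      (sq_nonneg h)
  have hdrift : Mhat ((j : ℝ) * h) *
      (if Mhat ((j : ℝ) * h) < 0 then (u j - u (j - 1)) / h else (u (j + 1) - u j) / h) ≤ 0 := by
    split_ifs with hM
    · exact mul_nonpos_of_nonpos_of_nonneg hM.le (div_nonneg (sub_nonneg.2 (hmax _)) hh.le)
    · exact mul_nonpos_of_nonneg_of_nonpos (not_lt.1 hM)
        (div_nonpos_of_nonpos_of_nonneg (sub_nonpos.2 (hmax _)) hh.le)
  have hreaction := mul_nonpos_of_nonpos_of_nonneg hNhat hpos
  unfold localOp
  linarith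

lemma trapezoid_mul_nonpos (p : Prop) [Decidable p] {d : ℝ} (hd : d ≤ 0) (x γ : ℝ) :
    (if p then (1/2 : ℝ) else 1) * d * |x| ^ γ ≤ 0 :=
  mul_nonpos_of_nonpos_of_nonneg
    (mul_nonpos_of_nonneg_of_nonpos (by split_ifs <;> norm_num) hd) (rpow_nonneg (abs_nonneg x) γ)

lemma sub_sub_slope_nonpos_of_isMax (hh : 0 < h) {u : ℤ → ℝ} {j k : ℤ}
    (hmax : ∀ k, u k ≤ u j) (hjk : j ≤ k) :
    u k - u j - ((k : ℝ) * h - (j : ℝ) * h) * (u j - u (j - 1)) / h ≤ 0 := by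
  have hx : 0 ≤ (k : ℝ) * h - (j : ℝ) * h := by
    rw [← sub_mul]; exact mul_nonneg (sub_nonneg.2 (Int.cast_le.2 hjk)) hh.le
  have := div_nonneg (mul_nonneg hx (sub_nonneg.2 (hmax (j - 1)))) hh.le
  linarith [hmax k]

lemma nonlocalOp_nonpos_of_isMax (hh : 0 < h) {u : ℤ → ℝ} {j : ℤ}
    (hC1b : 0 ≤ C1b ((j : ℝ) * h)) (hC2b : 0 ≤ C2b ((j : ℝ) * h)) (hmax : ∀ k, u k ≤ u j) :
    nonlocalOp α σ C1b C2b J h u j ≤ 0 := by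
  have hσ : 0 ≤ |σ ((j : ℝ) * h)| ^ α := rpow_nonneg (abs_nonneg _) α
  have hw₁ := mul_nonneg (mul_nonneg hσ hC1b) hh.le
  have hw₂ := mul_nonneg (mul_nonneg hσ hC2b) hh.le
  have hsym : ∀ s : Finset ℤ, ∀ p : ℤ → Prop, [DecidablePred p] →
      ∑ k ∈ s, (if p k then (1/2 : ℝ) else 1) * (u k - u j) *
        |(k : ℝ) * h - (j : ℝ) * h| ^ (-(1 + α)) ≤ 0 := fun s p _ =>
    sum_nonpos fun k _ => trapezoid_mul_nonpos _ (sub_nonpos.2 (hmax k)) _ _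
  have hcorr : ∀ n : ℤ, ∀ p : ℤ → Prop, [DecidablePred p] →
      ∑ k ∈ Finset.Icc (j + 1) n, (if p k then (1/2 : ℝ) else 1) *
        (u k - u j - ((k : ℝ) * h - (j : ℝ) * h) * (u j - u (j - 1)) / h) *
          |(k : ℝ) * h - (j : ℝ) * h| ^ (-(1 + α)) ≤ 0 := fun n p _ =>
    sum_nonpos fun k hk => trapezoid_mul_nonpos _
      (sub_sub_slope_nonpos_of_isMax hh hmax (by linarith [(Finset.mem_Icc.1 hk).1])) _ _
  unfold nonlocalOp
  split_ifs
  · exact add_nonpos (mul_nonpos_of_nonneg_of_nonpos hw₁ (hsym _ _))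
      (mul_nonpos_of_nonneg_of_nonpos hw₂ (hcorr _ _))
  · exact add_nonpos (mul_nonpos_of_nonneg_of_nonpos hw₁ (hsym _ _))
      (mul_nonpos_of_nonneg_of_nonpos hw₂ (add_nonpos (hcorr _ _) (hsym _ _)))

end Scheme

theorem stmt_18_general (α β : ℝ) (hα : α ∈ Set.Ioo (0:ℝ) 2)
    (hβ : β ∈ Set.Ioo (-1:ℝ) 1)
    (σ : ℝ → ℝ)
    (J : ℤ) (hJ : 2 ≤ J) (h : ℝ) (hh : h = 1 / (J : ℝ)) (T : ℝ) (hT : 0 < T)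
    -- the coefficient functions of the scheme
    (C1b C2b Mhat Nhat Ch : ℝ → ℝ)
    (hC1b : ∀ x, C1b x = if 0 < σ x then Cp α β else Cn α β)
    -- the semi-discrete solution and its time derivative
    (U U' : ℤ → ℝ → ℝ)
    (hUcont : ∀ j : ℤ, ContinuousOn (U j) (Set.Icc 0 T))
    (hUderiv : ∀ j : ℤ, ∀ t ∈ Set.Ioc (0:ℝ) T, HasDerivAt (U j) (U' j t) t)
    (hUzero : ∀ j : ℤ, ∀ t : ℝ, J ≤ |j| → U j t = 0)
    -- the discrete spatial operators A and B
    (AU BU : ℤ → ℝ → ℝ)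
    (hAU : ∀ j : ℤ, |(j : ℝ) * h| < 1 → ∀ t : ℝ, AU j t =
      Ch ((j : ℝ) * h) * (U (j + 1) t - 2 * U j t + U (j - 1) t) / h ^ 2
        + Mhat ((j : ℝ) * h) *
            (if Mhat ((j : ℝ) * h) < 0 then (U j t - U (j - 1) t) / h
             else (U (j + 1) t - U j t) / h)
        + Nhat ((j : ℝ) * h) * U j t)
    (hBU : ∀ j : ℤ, |(j : ℝ) * h| < 1 → ∀ t : ℝ, BU j t =
      if 1 < |σ ((j : ℝ) * h)| + (j : ℝ) * h then
        |σ ((j : ℝ) * h)| ^ α * C1b ((j : ℝ) * h) * h *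
          ∑ k ∈ (Finset.Icc (1 - J) (J - 1)).erase j,
            (if k = 1 - J ∨ k = J - 1 then (1/2 : ℝ) else 1) *
              (U k t - U j t) * |(k : ℝ) * h - (j : ℝ) * h| ^ (-(1 + α))
        + |σ ((j : ℝ) * h)| ^ α * C2b ((j : ℝ) * h) * h *
          ∑ k ∈ Finset.Icc (j + 1) J,
            (if k = J then (1/2 : ℝ) else 1) *
              (U k t - U j t - ((k : ℝ) * h - (j : ℝ) * h) * (U j t - U (j - 1) t) / h) *
                |(k : ℝ) * h - (j : ℝ) * h| ^ (-(1 + α))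
      else
        |σ ((j : ℝ) * h)| ^ α * C1b ((j : ℝ) * h) * h *
          ∑ k ∈ (Finset.Icc (1 - J) (J - 1)).erase j,
            (if k = 1 - J ∨ k = J - 1 then (1/2 : ℝ) else 1) *
              (U k t - U j t) * |(k : ℝ) * h - (j : ℝ) * h| ^ (-(1 + α))
        + |σ ((j : ℝ) * h)| ^ α * C2b ((j : ℝ) * h) * h *
          ((∑ k ∈ Finset.Icc (j + 1) (j + ⌊|σ ((j : ℝ) * h)| / h⌋),
              (if k = j + ⌊|σ ((j : ℝ) * h)| / h⌋ then (1/2 : ℝ) else 1) *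
                (U k t - U j t - ((k : ℝ) * h - (j : ℝ) * h) * (U j t - U (j - 1) t) / h) *
                  |(k : ℝ) * h - (j : ℝ) * h| ^ (-(1 + α)))
            + ∑ k ∈ Finset.Icc (j + ⌊|σ ((j : ℝ) * h)| / h⌋) J,
                (if k = j + ⌊|σ ((j : ℝ) * h)| / h⌋ ∨ k = J then (1/2 : ℝ) else 1) *
                  (U k t - U j t) * |(k : ℝ) * h - (j : ℝ) * h| ^ (-(1 + α))))
    -- sign assumptions on the coefficients
    (hNneg : ∀ j : ℤ, |(j : ℝ) * h| < 1 → Nhat ((j : ℝ) * h) ≤ 0)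
    (hC2pos : ∀ j : ℤ, |(j : ℝ) * h| < 1 → 0 ≤ C2b ((j : ℝ) * h))
    (hChpos : ∀ j : ℤ, |(j : ℝ) * h| < 1 → 0 ≤ Ch ((j : ℝ) * h)) :
    -- (i) maximum principle for subsolutions
    ((∀ j : ℤ, ∀ t : ℝ, |(j : ℝ) * h| < 1 → t ∈ Set.Ioc (0:ℝ) T →
        U' j t - (AU j t + BU j t) ≤ 0) →
      sSup {y : ℝ | ∃ j : ℤ, ∃ t ∈ Set.Icc (0:ℝ) T, y = U j t}
        = sSup {y : ℝ | ∃ j : ℤ, ∃ t ∈ Set.Icc (0:ℝ) T,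
            ¬(|(j : ℝ) * h| < 1 ∧ t ∈ Set.Ioc (0:ℝ) T) ∧ y = U j t}) ∧
    -- (ii) minimum principle for supersolutions
    ((∀ j : ℤ, ∀ t : ℝ, |(j : ℝ) * h| < 1 → t ∈ Set.Ioc (0:ℝ) T →
        0 ≤ U' j t - (AU j t + BU j t)) →
      sInf {y : ℝ | ∃ j : ℤ, ∃ t ∈ Set.Icc (0:ℝ) T, y = U j t}
        = sInf {y : ℝ | ∃ j : ℤ, ∃ t ∈ Set.Icc (0:ℝ) T,
            ¬(|(j : ℝ) * h| < 1 ∧ t ∈ Set.Ioc (0:ℝ) T) ∧ y = U j t}) := by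
  have hh₀ : 0 < h := by
    rw [hh]
    exact one_div_pos.2 (Int.cast_pos.2 (by omega))
  have hC1b₀ : ∀ x, 0 ≤ C1b x := fun x => by
    rw [hC1b x]
    split_ifs
    exacts [Cp_nonneg hα hβ.1.le, Cn_nonneg hα hβ.2.le]
  have hsupp : ∀ j ∉ Finset.Ioo (-J) J, ∀ t, U j t = 0 := fun j hj t => by
    rw [Finset.mem_Ioo, not_and_or, not_lt, not_lt] at hj
    exact hUzero j t (by cases abs_cases j <;> omega)
  have hAU' : ∀ j : ℤ, |(j : ℝ) * h| < 1 → ∀ t, AU j t = localOp Ch Mhat Nhat h (U · t) j := hAU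
  have hBU' : ∀ j : ℤ, |(j : ℝ) * h| < 1 → ∀ t, BU j t = nonlocalOp α σ C1b C2b J h (U · t) j := hBU
  have hscheme : ∀ u : ℤ → ℝ, ∀ j : ℤ, |(j : ℝ) * h| < 1 → (∀ k, u k ≤ u j) → 0 ≤ u j →
      localOp Ch Mhat Nhat h u j + nonlocalOp α σ C1b C2b J h u j ≤ 0 := fun u j hj hmax hpos =>
    add_nonpos (localOp_nonpos_of_isMax hh₀ (hChpos j hj) (hNneg j hj) hmax hpos)
      (nonlocalOp_nonpos_of_isMax hh₀ (hC1b₀ _) (hC2pos j hj) hmax)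
  refine ⟨fun hsub => sSup_eq_sSup_parabolicBoundary hT _ hsupp hUcont (fun j _ => hUderiv j)
    fun j hj t ht hmax hpos => ?_, fun hsup => sInf_eq_sInf_parabolicBoundary hT _ hsupp hUcont
    (fun j _ => hUderiv j) fun j hj t ht hmin hneg => ?_⟩
  · linarith [hsub j t hj ht, hAU' j hj t, hBU' j hj t, hscheme _ j hj hmax hpos]
  · have := hscheme (fun k => -U k t) j hj (fun k => neg_le_neg (hmin k)) (neg_nonneg.2 hneg)
    rw [localOp_neg, nonlocalOp_neg] at this
    linarith [hsup j t hj ht, hAU' j hj t, hBU' j hj t]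

/-- maximum principle for the semi-discrete asymmetric scheme with
absorbing condition: for the semi-discrete operator `R̃ = A + B` (central differencing
for diffusion, upwind for drift, trapezoidal quadrature with zeta correction for the
singular integral), under `N̂(x_j) ≤ 0`, `C_{2,β}(x_j) ≥ 0`, `C_h(x_j) ≥ 0` on
`I_h = {j : |jh| < 1}` and the absorbing condition `U_j ≡ 0` for `|j| ≥ J`:
(i) a discrete subsolution attains its maximum over `ℤ × [0,T]` on the parabolic
boundary `∂I_{h,T} = (ℤ × [0,T]) ∖ (I_h × (0,T])`, and (ii) a discrete supersolution
attains its minimum there. -/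
theorem stmt_18 (α β : ℝ) (hα : α ∈ Set.Ioo (0:ℝ) 2) (hα1 : α ≠ 1)
    (hβ : β ∈ Set.Ioo (-1:ℝ) 1)
    (f g σ : ℝ → ℝ) (hf : ContDiff ℝ 1 f) (hg : ContDiff ℝ 2 g)
    (hσC : ContDiff ℝ 1 σ) (hσ0 : ∀ x, σ x ≠ 0)
    (hσα : ContDiff ℝ 2 fun x => |σ x| ^ α)
    (J : ℤ) (hJ : 2 ≤ J) (h : ℝ) (hh : h = 1 / (J : ℝ)) (T : ℝ) (hT : 0 < T)
    -- the coefficient functions of the scheme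
    (MM NN C1b C2b Mhat Nhat Ch : ℝ → ℝ)
    (hMM : ∀ x, MM x = |σ x| ^ α * deriv (fun y => g y ^ 2 / |σ y| ^ α) x - f x)
    (hNN : ∀ x, NN x = (1/2) * |σ x| ^ α * deriv (deriv (fun y => g y ^ 2 / |σ y| ^ α)) x
      - |σ x| ^ α * deriv (fun y => f y / |σ y| ^ α) x)
    (hC1b : ∀ x, C1b x = if 0 < σ x then Cp α β else Cn α β)
    (hC2b : ∀ x, C2b x = if 0 < σ x then -(β * Calpha α) else β * Calpha α)
    (hMhat : ∀ x, Mhat x =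
      if 1 - x < |σ x| then
        MM x - |σ x| ^ α * (C2b x / (1 - α)) * (|σ x| ^ (1 - α) - (1 - x) ^ (1 - α))
      else MM x)
    (hNhat : ∀ x, Nhat x = NN x + β * Calpha α * deriv σ x
      - |σ x| ^ α * ((if 0 < σ x then Cp α (-β) else Cn α (-β)) / α) * (1 - x) ^ (-α)
      - |σ x| ^ α * (C1b x / α) * (1 + x) ^ (-α))
    (hCh : ∀ x, Ch x = g x ^ 2 / 2
      - (Calpha α * |σ x| ^ α / 2) * zetaR (α - 1) * h ^ ((2 : ℝ) - α))
    -- the semi-discrete solution and its time derivative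
    (U U' : ℤ → ℝ → ℝ)
    (hUcont : ∀ j : ℤ, ContinuousOn (U j) (Set.Icc 0 T))
    (hUderiv : ∀ j : ℤ, ∀ t ∈ Set.Ioc (0:ℝ) T, HasDerivAt (U j) (U' j t) t)
    (hUzero : ∀ j : ℤ, ∀ t : ℝ, J ≤ |j| → U j t = 0)
    -- the discrete spatial operators A and B
    (AU BU : ℤ → ℝ → ℝ)
    (hAU : ∀ j : ℤ, |(j : ℝ) * h| < 1 → ∀ t : ℝ, AU j t =
      Ch ((j : ℝ) * h) * (U (j + 1) t - 2 * U j t + U (j - 1) t) / h ^ 2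
        + Mhat ((j : ℝ) * h) *
            (if Mhat ((j : ℝ) * h) < 0 then (U j t - U (j - 1) t) / h
             else (U (j + 1) t - U j t) / h)
        + Nhat ((j : ℝ) * h) * U j t)
    (hBU : ∀ j : ℤ, |(j : ℝ) * h| < 1 → ∀ t : ℝ, BU j t =
      if 1 < |σ ((j : ℝ) * h)| + (j : ℝ) * h then
        |σ ((j : ℝ) * h)| ^ α * C1b ((j : ℝ) * h) * h *
          ∑ k ∈ (Finset.Icc (1 - J) (J - 1)).erase j,
            (if k = 1 - J ∨ k = J - 1 then (1/2 : ℝ) else 1) *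
              (U k t - U j t) * |(k : ℝ) * h - (j : ℝ) * h| ^ (-(1 + α))
        + |σ ((j : ℝ) * h)| ^ α * C2b ((j : ℝ) * h) * h *
          ∑ k ∈ Finset.Icc (j + 1) J,
            (if k = J then (1/2 : ℝ) else 1) *
              (U k t - U j t - ((k : ℝ) * h - (j : ℝ) * h) * (U j t - U (j - 1) t) / h) *
                |(k : ℝ) * h - (j : ℝ) * h| ^ (-(1 + α))
      else
        |σ ((j : ℝ) * h)| ^ α * C1b ((j : ℝ) * h) * h *
          ∑ k ∈ (Finset.Icc (1 - J) (J - 1)).erase j,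
            (if k = 1 - J ∨ k = J - 1 then (1/2 : ℝ) else 1) *
              (U k t - U j t) * |(k : ℝ) * h - (j : ℝ) * h| ^ (-(1 + α))
        + |σ ((j : ℝ) * h)| ^ α * C2b ((j : ℝ) * h) * h *
          ((∑ k ∈ Finset.Icc (j + 1) (j + ⌊|σ ((j : ℝ) * h)| / h⌋),
              (if k = j + ⌊|σ ((j : ℝ) * h)| / h⌋ then (1/2 : ℝ) else 1) *
                (U k t - U j t - ((k : ℝ) * h - (j : ℝ) * h) * (U j t - U (j - 1) t) / h) *
                  |(k : ℝ) * h - (j : ℝ) * h| ^ (-(1 + α)))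
            + ∑ k ∈ Finset.Icc (j + ⌊|σ ((j : ℝ) * h)| / h⌋) J,
                (if k = j + ⌊|σ ((j : ℝ) * h)| / h⌋ ∨ k = J then (1/2 : ℝ) else 1) *
                  (U k t - U j t) * |(k : ℝ) * h - (j : ℝ) * h| ^ (-(1 + α))))
    -- sign assumptions on the coefficients
    (hNneg : ∀ j : ℤ, |(j : ℝ) * h| < 1 → Nhat ((j : ℝ) * h) ≤ 0)
    (hC2pos : ∀ j : ℤ, |(j : ℝ) * h| < 1 → 0 ≤ C2b ((j : ℝ) * h))
    (hChpos : ∀ j : ℤ, |(j : ℝ) * h| < 1 → 0 ≤ Ch ((j : ℝ) * h)) :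
    -- (i) maximum principle for subsolutions
    ((∀ j : ℤ, ∀ t : ℝ, |(j : ℝ) * h| < 1 → t ∈ Set.Ioc (0:ℝ) T →
        U' j t - (AU j t + BU j t) ≤ 0) →
      sSup {y : ℝ | ∃ j : ℤ, ∃ t ∈ Set.Icc (0:ℝ) T, y = U j t}
        = sSup {y : ℝ | ∃ j : ℤ, ∃ t ∈ Set.Icc (0:ℝ) T,
            ¬(|(j : ℝ) * h| < 1 ∧ t ∈ Set.Ioc (0:ℝ) T) ∧ y = U j t}) ∧
    -- (ii) minimum principle for supersolutions
    ((∀ j : ℤ, ∀ t : ℝ, |(j : ℝ) * h| < 1 → t ∈ Set.Ioc (0:ℝ) T →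
        0 ≤ U' j t - (AU j t + BU j t)) →
      sInf {y : ℝ | ∃ j : ℤ, ∃ t ∈ Set.Icc (0:ℝ) T, y = U j t}
        = sInf {y : ℝ | ∃ j : ℤ, ∃ t ∈ Set.Icc (0:ℝ) T,
            ¬(|(j : ℝ) * h| < 1 ∧ t ∈ Set.Ioc (0:ℝ) T) ∧ y = U j t}) :=
  stmt_18_general α β hα hβ σ J hJ h hh T hT C1b C2b Mhat Nhat Ch hC1b U U' hUcont hUderiv hUzero AU
    BU hAU hBU hNneg hC2pos hChpos
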